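/- Under the same hypotheses, the Birkhoff contraction theorem holds: H(Lx, Ly) ≤ tanh(Δ(L)/4) · H(x,y) for all x, y ∈ C \ {0}, where Δ(L) = sup over x,y ∈ C\{0} of H(Lx, Ly). -/

import Mathlib

/-!
Given `x, y` in the cone with `a x - y` and `b y - x` in `C`, set `λ = 1/b`, `μ = a`,
`u = y - λ x` and `v = μ x - y`. Since `H(Lu, Lv) ≤ Δ`, there are `0 < p ≤ q` with
`log (q/p) ≤ Δ` and `L v - p L u`, `q L u - L v` in `C`. Writing `Lx, Ly` as combinations of
`Lu, Lv` bounds `β(Lx, Ly) β(Ly, Lx)` explicitly in terms of `p, q, μ/λ`, and the contraction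
factor comes from a one-variable estimate: the derivative of `s ↦ log (eˢ + p) - log (eˢ + q)`
is at most `(√q - √p)/(√q + √p) = tanh (log (q/p) / 4)`, by AM-GM.
-/

open scoped ENNReal

/-- The Birkhoff coefficient `β(x,y) = inf {r > 0 : r • x - y ∈ C}`, valued in `ℝ≥0∞`. -/
noncomputable def hilbertBeta {X : Type*} [AddCommGroup X] [Module ℝ X]
    (C : Set X) (x y : X) : ℝ≥0∞ :=
  sInf {e : ℝ≥0∞ | ∃ r : ℝ, 0 < r ∧ e = ENNReal.ofReal r ∧ r • x - y ∈ C}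

/-- The Hilbert projective distance `H(x,y) = log (β(x,y) β(y,x)) ∈ [0,∞]`. -/
noncomputable def hilbertDist {X : Type*} [AddCommGroup X] [Module ℝ X]
    (C : Set X) (x y : X) : EReal :=
  ENNReal.log (hilbertBeta C x y * hilbertBeta C y x)

theorem div_add_sq_sub_div_add_sq_le {E a b : ℝ} (hE : 0 < E) (ha : 0 < a) (hab : a ≤ b) :
    E / (E + a ^ 2) - E / (E + b ^ 2) ≤ (b - a) / (b + a) := by
  rw [div_sub_div _ _ (by positivity) (by positivity),
    div_le_div_iff₀ (by positivity) (by linarith)]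
  -- AM-GM: `E (a + b)² ≤ (E + a²)(E + b²)`
  nlinarith [mul_nonneg (sub_nonneg.2 hab) (sq_nonneg (E - a * b))]

namespace Real

theorem strictMono_tanh : StrictMono tanh := fun x y hxy => by
  by_contra h
  have := artanh_le_artanh (neg_one_lt_tanh y) (tanh_lt_one x) (not_lt.1 h)
  rw [artanh_tanh, artanh_tanh] at this
  exact this.not_gt hxy

theorem tanh_eq_exp_two_mul (x : ℝ) : tanh x = (exp (2 * x) - 1) / (exp (2 * x) + 1) := by
  rw [tanh_eq, exp_neg, two_mul, exp_add]
  field_simp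

theorem tanh_log_div_two {s : ℝ} (hs : 0 < s) : tanh (log s / 2) = (s - 1) / (s + 1) := by
  rw [tanh_eq_exp_two_mul, mul_div_cancel₀ _ two_ne_zero, exp_log hs]

theorem log_exp_add_sub_log_exp_add_le {p q : ℝ} (hp : 0 < p) (hpq : p ≤ q) {s t : ℝ}
    (hst : s ≤ t) :
    (log (exp t + p) - log (exp t + q)) - (log (exp s + p) - log (exp s + q)) ≤
      (√q - √p) / (√q + √p) * (t - s) := by
  have hq : 0 < q := hp.trans_le hpq
  have hderiv (s : ℝ) : HasDerivAt (fun s => log (exp s + p) - log (exp s + q))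
      (exp s / (exp s + p) - exp s / (exp s + q)) s :=
    (((hasDerivAt_exp s).add_const p).log (by positivity)).sub
      (((hasDerivAt_exp s).add_const q).log (by positivity))
  refine image_sub_le_mul_sub_of_deriv_le (fun s => (hderiv s).differentiableAt) (fun s => ?_)
    hst
  rw [(hderiv s).deriv]
  have h := div_add_sq_sub_div_add_sq_le (exp_pos s) (sqrt_pos.2 hp) (sqrt_le_sqrt hpq)
  rwa [sq_sqrt hp.le, sq_sqrt hq.le] at h

theorem log_div_mul_div_le_tanh_mul_log {p q l m : ℝ} (hp : 0 < p) (hpq : p ≤ q) (hl : 0 < l)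
    (hlm : l ≤ m) :
    log ((m + l * p) / (1 + p) * ((q + 1) / (l * q + m))) ≤
      tanh (log (q / p) / 4) * log (m / l) := by
  have hq : 0 < q := hp.trans_le hpq
  have hm : 0 < m := hl.trans_le hlm
  have htanh : tanh (log (q / p) / 4) = (√q - √p) / (√q + √p) := by
    have hsp : 0 < √p := sqrt_pos.2 hp
    have hhalf : log (q / p) / 4 = log (√q / √p) / 2 := by
      rw [← sqrt_div' _ hp.le, log_sqrt (by positivity)]
      ring
    rw [hhalf, tanh_log_div_two (by positivity)]
    field_simp
  have key := log_exp_add_sub_log_exp_add_le hp hpq (log_nonneg ((one_le_div hl).2 hlm))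
  rw [exp_log (by positivity), exp_zero, sub_zero, ← htanh] at key
  have hsplit : (m + l * p) / (1 + p) * ((q + 1) / (l * q + m)) =
      (m / l + p) / (m / l + q) / ((1 + p) / (1 + q)) := by
    field_simp
    ring
  rw [hsplit, log_div (by positivity) (by positivity), log_div (by positivity) (by positivity),
    log_div (by positivity) (by positivity)]
  linarith

end Real

section HilbertDist

variable {X : Type*} [AddCommGroup X] [Module ℝ X] {K : PointedCone ℝ X} {x y : X} {a b : ℝ}

theorem hilbertBeta_le_ofReal (ha : 0 < a) (h : a • x - y ∈ K) :
    hilbertBeta K x y ≤ ENNReal.ofReal a :=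
  sInf_le ⟨a, ha, rfl, h⟩

theorem hilbertDist_le_log_mul (ha : 0 < a) (hb : 0 < b) (hax : a • x - y ∈ K)
    (hby : b • y - x ∈ K) : hilbertDist K x y ≤ (Real.log (a * b) : EReal) := by
  rw [hilbertDist, ← ENNReal.log_ofReal_of_pos (mul_pos ha hb), ENNReal.ofReal_mul ha.le]
  exact ENNReal.log_monotone
    (mul_le_mul' (hilbertBeta_le_ofReal ha hax) (hilbertBeta_le_ofReal hb hby))

theorem hilbertDist_smul_right_nonpos (x : X) {c : ℝ} (hc : 0 < c) :
    hilbertDist K x (c • x) ≤ 0 := by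
  have h := hilbertDist_le_log_mul (K := K) (x := x) (y := c • x) hc (inv_pos.2 hc) (by simp)
    (by simp [smul_smul, inv_mul_cancel₀ hc.ne'])
  rwa [mul_inv_cancel₀ hc.ne', Real.log_one, EReal.coe_zero] at h

theorem one_le_mul_of_smul_sub_mem (hK : (K : ConvexCone ℝ X).Salient) (hx : x ∈ K)
    (hx0 : x ≠ 0) (hb : 0 ≤ b) (hax : a • x - y ∈ K) (hby : b • y - x ∈ K) : 1 ≤ a * b := by
  by_contra! hab
  have hsum : (a * b - 1) • x ∈ K := by
    convert K.add_mem (K.smul_mem hb hax) hby using 1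
    simp only [smul_sub, smul_smul, sub_smul, one_smul, mul_comm b a]
    abel
  refine hK _ (K.smul_mem (r := 1 - a * b) (by linarith) hx) ?_ (by rwa [← neg_smul, neg_sub])
  exact smul_ne_zero (by linarith) hx0

variable [TopologicalSpace X] [IsTopologicalAddGroup X] [ContinuousSMul ℝ X]

theorem exists_hilbertBeta_eq_ofReal (hKc : IsClosed (K : Set X))
    (hK : (K : ConvexCone ℝ X).Salient) (hy : y ∈ K) (hy0 : y ≠ 0)
    (hβ : hilbertBeta K x y ≠ ⊤) :
    ∃ a, 0 < a ∧ hilbertBeta K x y = ENNReal.ofReal a ∧ a • x - y ∈ K := by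
  set T := {r : ℝ | 0 < r ∧ r • x - y ∈ K}
  -- `r = 0` is excluded by salience, so `T` is closed
  have hT : T = Set.Ici 0 ∩ (fun r : ℝ => r • x - y) ⁻¹' K := by
    ext r
    refine ⟨fun h => ⟨h.1.le, h.2⟩, fun ⟨hr, h⟩ => ⟨hr.lt_of_ne ?_, h⟩⟩
    rintro rfl
    exact hK y hy hy0 (by simpa using h)
  have hTc : IsClosed T := hT ▸ isClosed_Ici.inter (hKc.preimage (by fun_prop))
  have hTne : T.Nonempty := by
    by_contra hTe
    refine hβ (sInf_eq_top.2 ?_)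
    rintro _ ⟨r, hr, rfl, h⟩
    exact absurd ⟨r, hr, h⟩ hTe
  have hTbdd : BddBelow T := ⟨0, fun r hr => hr.1.le⟩
  obtain ⟨hpos, hmem⟩ := hTc.csInf_mem hTne hTbdd
  refine ⟨sInf T, hpos, le_antisymm (hilbertBeta_le_ofReal hpos hmem) ?_, hmem⟩
  refine le_sInf ?_
  rintro _ ⟨r, hr, rfl, h⟩
  exact ENNReal.ofReal_le_ofReal (csInf_le hTbdd ⟨hr, h⟩)

theorem hilbertBeta_ne_zero (hKc : IsClosed (K : Set X)) (hK : (K : ConvexCone ℝ X).Salient)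
    (hy : y ∈ K) (hy0 : y ≠ 0) : hilbertBeta K x y ≠ 0 := by
  intro h0
  obtain ⟨a, ha, heq, -⟩ :=
    exists_hilbertBeta_eq_ofReal (x := x) hKc hK hy hy0 (by simp [h0])
  rw [h0, eq_comm, ENNReal.ofReal_eq_zero] at heq
  exact heq.not_gt ha

theorem exists_hilbertDist_eq_log_mul (hKc : IsClosed (K : Set X))
    (hK : (K : ConvexCone ℝ X).Salient) (hx : x ∈ K) (hx0 : x ≠ 0) (hy : y ∈ K) (hy0 : y ≠ 0)
    (hxy : hilbertDist K x y ≠ ⊤) :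
    ∃ a b, 0 < a ∧ 0 < b ∧ a • x - y ∈ K ∧ b • y - x ∈ K ∧
      hilbertDist K x y = (Real.log (a * b) : EReal) := by
  have hprod : hilbertBeta K x y * hilbertBeta K y x ≠ ⊤ := fun h => by
    simp [hilbertDist, h] at hxy
  have hxy0 := hilbertBeta_ne_zero (x := x) hKc hK hy hy0
  have hyx0 := hilbertBeta_ne_zero (x := y) hKc hK hx hx0
  obtain ⟨a, ha, hβa, hax⟩ := exists_hilbertBeta_eq_ofReal hKc hK hy hy0
    fun h => hprod (ENNReal.mul_eq_top.2 (.inr ⟨h, hyx0⟩))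
  obtain ⟨b, hb, hβb, hby⟩ := exists_hilbertBeta_eq_ofReal hKc hK hx hx0
    fun h => hprod (ENNReal.mul_eq_top.2 (.inl ⟨hxy0, h⟩))
  refine ⟨a, b, ha, hb, hax, hby, ?_⟩
  rw [hilbertDist, hβa, hβb, ← ENNReal.ofReal_mul ha.le,
    ENNReal.log_ofReal_of_pos (mul_pos ha hb)]

theorem hilbertDist_nonneg (hKc : IsClosed (K : Set X)) (hK : (K : ConvexCone ℝ X).Salient)
    (hx : x ∈ K) (hx0 : x ≠ 0) (hy : y ∈ K) (hy0 : y ≠ 0) : 0 ≤ hilbertDist K x y := by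
  by_cases hxy : hilbertDist K x y = ⊤
  · simp [hxy]
  obtain ⟨a, b, -, hb, hax, hby, heq⟩ :=
    exists_hilbertDist_eq_log_mul hKc hK hx hx0 hy hy0 hxy
  rw [heq, EReal.coe_nonneg]
  exact Real.log_nonneg (one_le_mul_of_smul_sub_mem hK hx hx0 hb.le hax hby)

theorem hilbertDist_le_tanh_mul_log (hKc : IsClosed (K : Set X))
    (hK : (K : ConvexCone ℝ X).Salient) {l m D : ℝ} (hl : 0 < l) (hlm : l ≤ m)
    (hu : y - l • x ∈ K) (hu0 : y - l • x ≠ 0) (hv : m • x - y ∈ K) (hv0 : m • x - y ≠ 0)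
    (hD : hilbertDist K (y - l • x) (m • x - y) ≤ D) :
    hilbertDist K x y ≤ (Real.tanh (D / 4) * Real.log (m / l) : ℝ) := by
  set u := y - l • x with hu_def
  set v := m • x - y with hv_def
  obtain ⟨q, p', hq, hp', hqu, hpv, hquv⟩ :=
    exists_hilbertDist_eq_log_mul hKc hK hu hu0 hv hv0 (ne_top_of_le_ne_top (EReal.coe_ne_top D) hD)
  have hqp' : 1 ≤ q * p' := one_le_mul_of_smul_sub_mem hK hu hu0 hp'.le hqu hpv
  set p := p'⁻¹ with hp_def
  have hp : 0 < p := inv_pos.2 hp'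
  have hpq : p ≤ q := (inv_le_iff_one_le_mul₀ hp').2 hqp'
  have hlog : Real.log (q / p) ≤ D := by
    rwa [hp_def, div_inv_eq_mul, ← EReal.coe_le_coe_iff, ← hquv]
  have hvu : v - p • u ∈ K := by
    have h := K.smul_mem hp.le hpv
    rwa [smul_sub, smul_smul, show p * p' = 1 from inv_mul_cancel₀ hp'.ne', one_smul] at h
  have hm : 0 < m := hl.trans_le hlm
  have hp1 : 1 + p ≠ 0 := by positivity
  have hlqm : l * q + m ≠ 0 := by positivity
  have hx_coeff : ((m + l * p) / (1 + p)) • x - y = (1 + p)⁻¹ • (v - p • u) := by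
    rw [hu_def, hv_def]
    match_scalars <;> field_simp <;> ring
  have hy_coeff : ((q + 1) / (l * q + m)) • y - x = (l * q + m)⁻¹ • (q • u - v) := by
    rw [hu_def, hv_def]
    match_scalars <;> field_simp <;> ring
  calc hilbertDist K x y
      ≤ (Real.log ((m + l * p) / (1 + p) * ((q + 1) / (l * q + m))) : EReal) :=
        hilbertDist_le_log_mul (by positivity) (by positivity)
          (hx_coeff ▸ K.smul_mem (by positivity) hvu)
          (hy_coeff ▸ K.smul_mem (by positivity) hqu)
    _ ≤ (Real.tanh (Real.log (q / p) / 4) * Real.log (m / l) : ℝ) :=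
        EReal.coe_le_coe (Real.log_div_mul_div_le_tanh_mul_log hp hpq hl hlm)
    _ ≤ (Real.tanh (D / 4) * Real.log (m / l) : ℝ) :=
        EReal.coe_le_coe (mul_le_mul_of_nonneg_right
          (Real.strictMono_tanh.monotone (by linarith))
          (Real.log_nonneg ((one_le_div hl).2 hlm)))

end HilbertDist

theorem hilbertDist_map_le_tanh_mul_log {X Y : Type*} [AddCommGroup X] [Module ℝ X]
    [AddCommGroup Y] [Module ℝ Y] [TopologicalSpace Y] [IsTopologicalAddGroup Y]
    [ContinuousSMul ℝ Y] {K : PointedCone ℝ X} {K' : PointedCone ℝ Y}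
    (hK : (K : ConvexCone ℝ X).Salient) (hK'c : IsClosed (K' : Set Y))
    (hK' : (K' : ConvexCone ℝ Y).Salient) {L : X →ₗ[ℝ] Y}
    (hL : ∀ x ∈ K, x ≠ 0 → L x ∈ K' ∧ L x ≠ 0) {D : ℝ}
    (hD : ∀ u ∈ K, u ≠ 0 → ∀ v ∈ K, v ≠ 0 → hilbertDist K' (L u) (L v) ≤ D)
    {x y : X} (hx : x ∈ K) (hx0 : x ≠ 0) {a b : ℝ} (ha : 0 < a) (hb : 0 < b)
    (hax : a • x - y ∈ K) (hby : b • y - x ∈ K) :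
    hilbertDist K' (L x) (L y) ≤ (Real.tanh (D / 4) * Real.log (a * b) : ℝ) := by
  have hab : 1 ≤ a * b := one_le_mul_of_smul_sub_mem hK hx hx0 hb.le hax hby
  obtain ⟨hLx, hLx0⟩ := hL x hx hx0
  have hD0 : 0 ≤ D := EReal.coe_nonneg.1 <|
    (hilbertDist_nonneg hK'c hK' hLx hLx0 hLx hLx0).trans (hD x hx hx0 x hx hx0)
  have hrhs : (0 : EReal) ≤ (Real.tanh (D / 4) * Real.log (a * b) : ℝ) :=
    EReal.coe_nonneg.2 <| mul_nonneg
      (Real.tanh_zero ▸ Real.strictMono_tanh.monotone (by linarith)) (Real.log_nonneg hab)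
  have hproportional (c : ℝ) (hc : 0 < c) (hyx : y = c • x) :
      hilbertDist K' (L x) (L y) ≤ (Real.tanh (D / 4) * Real.log (a * b) : ℝ) := by
    rw [hyx, map_smul]
    exact (hilbertDist_smul_right_nonpos _ hc).trans hrhs
  have hu : y - b⁻¹ • x ∈ K := by
    convert K.smul_mem (inv_pos.2 hb).le hby using 1
    rw [smul_sub, smul_smul, inv_mul_cancel₀ hb.ne', one_smul]
  by_cases hu0 : y - b⁻¹ • x = 0
  · exact hproportional b⁻¹ (inv_pos.2 hb) (sub_eq_zero.1 hu0)
  by_cases hv0 : a • x - y = 0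
  · exact hproportional a ha (sub_eq_zero.1 hv0).symm
  have h := hilbertDist_le_tanh_mul_log hK'c hK' (inv_pos.2 hb)
    ((inv_le_iff_one_le_mul₀ hb).2 hab)
    (by simpa using (hL _ hu hu0).1) (by simpa using (hL _ hu hu0).2)
    (by simpa using (hL _ hax hv0).1) (by simpa using (hL _ hax hv0).2)
    (by simpa using hD _ hu hu0 _ hax hv0)
  rwa [div_inv_eq_mul] at h

theorem stmt6_general {X : Type*} [AddCommGroup X] [Module ℝ X] [TopologicalSpace X]
    [IsTopologicalAddGroup X] [ContinuousSMul ℝ X]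
    (C : Set X) (hCclosed : IsClosed C)
    (hadd : ∀ x ∈ C, ∀ y ∈ C, x + y ∈ C)
    (hsmul : ∀ r : ℝ, 0 ≤ r → ∀ x ∈ C, r • x ∈ C)
    (hproper : C ∩ (-C) = {0})
    (L : X →ₗ[ℝ] X) (hL : ∀ x ∈ C \ {0}, L x ∈ C \ {0})
    (Δ : EReal)
    (hΔ : Δ = sSup {d : EReal | ∃ x ∈ C \ {0}, ∃ y ∈ C \ {0}, d = hilbertDist C (L x) (L y)})
    (hΔfin : Δ ≠ ⊤)
    (x y : X) (hx : x ∈ C \ {0}) (hy : y ∈ C \ {0}) :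
    hilbertDist C (L x) (L y) ≤ (Real.tanh (Δ.toReal / 4) : EReal) * hilbertDist C x y := by
  let K : PointedCone ℝ X :=
    { carrier := C
      add_mem' := fun hu hv => hadd _ hu _ hv
      zero_mem' := (hproper.symm.subset rfl).1
      smul_mem' := fun c u hu => hsmul c c.2 u hu }
  have hK : (K : ConvexCone ℝ X).Salient :=
    (PointedCone.salient_iff_inter_neg_eq_singleton K).2 hproper
  have hLK (u : X) (hu : u ∈ K) (hu0 : u ≠ 0) : L u ∈ K ∧ L u ≠ 0 := hL u ⟨hu, hu0⟩
  have hΔle (u : X) (hu : u ∈ K) (hu0 : u ≠ 0) (v : X) (hv : v ∈ K) (hv0 : v ≠ 0) :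
      hilbertDist C (L u) (L v) ≤ Δ :=
    hΔ ▸ le_sSup ⟨u, ⟨hu, hu0⟩, v, ⟨hv, hv0⟩, rfl⟩
  have hΔ0 : 0 ≤ Δ := (hilbertDist_nonneg hCclosed hK (hLK x hx.1 hx.2).1 (hLK x hx.1 hx.2).2
    (hLK y hy.1 hy.2).1 (hLK y hy.1 hy.2).2).trans (hΔle x hx.1 hx.2 y hy.1 hy.2)
  obtain ⟨D, rfl⟩ : ∃ D : ℝ, (D : EReal) = Δ := ⟨Δ.toReal, EReal.coe_toReal hΔfin
    (ne_bot_of_le_ne_bot EReal.zero_ne_bot hΔ0)⟩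
  rw [EReal.toReal_coe]
  by_cases hxy : hilbertDist C x y = ⊤
  · rcases (EReal.coe_nonneg.1 hΔ0).eq_or_lt with hD0 | hD0
    · rw [hxy, ← hD0, zero_div, Real.tanh_zero, EReal.coe_zero, zero_mul]
      simpa [← hD0] using hΔle x hx.1 hx.2 y hy.1 hy.2
    · have htanh : 0 < Real.tanh (D / 4) :=
        Real.tanh_zero ▸ Real.strictMono_tanh (by positivity)
      rw [hxy, EReal.coe_mul_top_of_pos htanh]
      exact le_top
  obtain ⟨a, b, ha, hb, hax, hby, hxy⟩ :=
    exists_hilbertDist_eq_log_mul hCclosed hK hx.1 hx.2 hy.1 hy.2 hxy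
  refine (hilbertDist_map_le_tanh_mul_log hK hCclosed hK hLK hΔle hx.1 hx.2 ha hb hax hby).trans_eq
    ?_
  rw [EReal.coe_mul, ← hxy]
  rfl

/-- Birkhoff's contraction theorem: if `L` is linear, maps `C \ {0}` into itself, and
the projective diameter `Δ(L) = sup_{x,y∈C\{0}} H(Lx,Ly)` is finite, then
`H(Lx, Ly) ≤ tanh(Δ(L)/4) · H(x,y)`. -/
theorem stmt6 {X : Type*} [AddCommGroup X] [Module ℝ X] [TopologicalSpace X]
    [IsTopologicalAddGroup X] [ContinuousSMul ℝ X] [LocallyConvexSpace ℝ X]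
    (C : Set X) (hCclosed : IsClosed C)
    (hadd : ∀ x ∈ C, ∀ y ∈ C, x + y ∈ C)
    (hsmul : ∀ r : ℝ, 0 ≤ r → ∀ x ∈ C, r • x ∈ C)
    (hproper : C ∩ (-C) = {0})
    (L : X →ₗ[ℝ] X) (hL : ∀ x ∈ C \ {0}, L x ∈ C \ {0})
    (Δ : EReal)
    (hΔ : Δ = sSup {d : EReal | ∃ x ∈ C \ {0}, ∃ y ∈ C \ {0}, d = hilbertDist C (L x) (L y)})
    (hΔfin : Δ ≠ ⊤)
    (x y : X) (hx : x ∈ C \ {0}) (hy : y ∈ C \ {0}) :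
    hilbertDist C (L x) (L y) ≤ (Real.tanh (Δ.toReal / 4) : EReal) * hilbertDist C x y :=
  stmt6_general C hCclosed hadd hsmul hproper L hL Δ hΔ hΔfin x y hx hy
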